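/- For every q > 0 there exists a constant γ = γ(q) ≥ 1 such that for all w, k ∈ ℝ and both choices of sign: γ^{-1} (|w| + |k|)^{q−1} ((w − k)_±)² ≤ g_±(w,k) ≤ γ (|w| + |k|)^{q−1} ((w − k)_±)², where the outer expressions are interpreted as 0 when w = k = 0. -/

import Mathlib

/-!
Statement 2 ([BDL, Lemma 2.2]): for every `q > 0` there is `γ = γ(q) ≥ 1` such that
`γ⁻¹ (|w|+|k|)^{q-1} ((w-k)_±)² ≤ g_±(w,k) ≤ γ (|w|+|k|)^{q-1} ((w-k)_±)²`
for all `w k : ℝ` and both signs, where `g_±(w,k) = ± q ∫_k^w |σ|^{q-1}(σ-k)_± dσ`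
and the outer expressions are interpreted as `0` when `w = k = 0`.
-/

noncomputable section
open MeasureTheory

/-- positive part -/
def pPart (a : ℝ) : ℝ := max a 0
/-- negative part -/
def nPart (a : ℝ) : ℝ := max (-a) 0

/-- `g₊(w,k) = q ∫_k^w |σ|^{q-1}(σ-k)₊ dσ` -/
def gPlus (q w k : ℝ) : ℝ := q * ∫ σ in k..w, |σ| ^ (q - 1) * pPart (σ - k)
/-- `g₋(w,k) = -q ∫_k^w |σ|^{q-1}(σ-k)₋ dσ` -/
def gMinus (q w k : ℝ) : ℝ := -(q * ∫ σ in k..w, |σ| ^ (q - 1) * nPart (σ - k))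

section Stmt2Helpers
open Set intervalIntegral


lemma intervalIntegrable_abs_rpow {p : ℝ} (hp : -1 < p) (a b : ℝ) :
    IntervalIntegrable (fun σ : ℝ => |σ| ^ p) volume a b := by
  have h : ∀ c : ℝ, 0 ≤ c → IntervalIntegrable (fun σ : ℝ => |σ| ^ p) volume 0 c := by
    intro c hc
    rw [intervalIntegrable_iff, uIoc_of_le hc]
    have h1 : IntegrableOn (fun x : ℝ => x ^ p) (Set.Ioc 0 c) volume := by
      have := intervalIntegrable_rpow' (a := 0) (b := c) hp
      rwa [intervalIntegrable_iff, uIoc_of_le hc] at this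
    exact h1.congr_fun (fun x hx => by rw [abs_of_pos hx.1]) measurableSet_Ioc
  have key : ∀ c : ℝ, IntervalIntegrable (fun σ : ℝ => |σ| ^ p) volume 0 c := by
    intro c
    rcases le_total 0 c with hc | hc
    · exact h c hc
    · have h2 := (IntervalIntegrable.iff_comp_neg (f := fun σ : ℝ => |σ| ^ p) (by simp)).mp (h (-c) (by linarith))
      simp only [abs_neg, neg_zero, neg_neg] at h2
      exact h2
  exact (key a).symm.trans (key b)

lemma II_main {p : ℝ} (hp : -1 < p) (k a b : ℝ) :
    IntervalIntegrable (fun σ : ℝ => |σ| ^ p * (σ - k)) volume a b :=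
  (intervalIntegrable_abs_rpow hp a b).mul_continuousOn
    ((continuous_id.sub continuous_const).continuousOn)

lemma integral_sub_const (k a b : ℝ) :
    ∫ σ in a..b, (σ - k) = ((b - k) ^ 2 - (a - k) ^ 2) / 2 := by
  rw [intervalIntegral.integral_sub intervalIntegrable_id intervalIntegrable_const,
    integral_id, intervalIntegral.integral_const, smul_eq_mul]
  ring

lemma integral_abs_rpow_nonneg {q : ℝ} (hq : 0 < q) {a b : ℝ} (h0 : 0 ≤ a) (hab : a ≤ b) :
    ∫ σ in a..b, |σ| ^ (q - 1) = (b ^ q - a ^ q) / q := by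
  have h1 : ∫ σ in a..b, |σ| ^ (q - 1) = ∫ σ in a..b, σ ^ (q - 1) := by
    apply intervalIntegral.integral_congr
    intro x hx
    rw [uIcc_of_le hab] at hx
    simp only []
    rw [abs_of_nonneg (h0.trans hx.1)]
  rw [h1, integral_rpow (Or.inl (by linarith))]
  norm_num

lemma integral_abs_rpow_nonpos {q : ℝ} (hq : 0 < q) {a b : ℝ} (hb : b ≤ 0) (hab : a ≤ b) :
    ∫ σ in a..b, |σ| ^ (q - 1) = ((-a) ^ q - (-b) ^ q) / q := by
  have h := intervalIntegral.integral_comp_neg (a := a) (b := b) (fun σ : ℝ => |σ| ^ (q - 1))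
  simp only [abs_neg] at h
  rw [h, integral_abs_rpow_nonneg hq (by linarith) (by linarith)]

lemma integral_abs_rpow_le {q : ℝ} (hq : 0 < q) {a b : ℝ} (hab : a ≤ b) :
    ∫ σ in a..b, |σ| ^ (q - 1) ≤ (|a| ^ q + |b| ^ q) / q := by
  have hp : (-1 : ℝ) < q - 1 := by linarith
  have h2 : (0:ℝ) ≤ |a| ^ q := Real.rpow_nonneg (abs_nonneg a) q
  have h2' : (0:ℝ) ≤ |b| ^ q := Real.rpow_nonneg (abs_nonneg b) q
  rcases le_or_gt 0 a with h0a | h0a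
  · rw [integral_abs_rpow_nonneg hq h0a hab]
    have h1 : (0:ℝ) ≤ a ^ q := Real.rpow_nonneg h0a q
    have h3 : b ^ q = |b| ^ q := by rw [abs_of_nonneg (h0a.trans hab)]
    gcongr
    linarith
  rcases le_or_gt b 0 with h0b | h0b
  · rw [integral_abs_rpow_nonpos hq h0b hab]
    have h1 : (0:ℝ) ≤ (-b) ^ q := Real.rpow_nonneg (by linarith) q
    have h3 : (-a) ^ q = |a| ^ q := by rw [abs_of_neg h0a]
    gcongr
    linarith
  · rw [← intervalIntegral.integral_add_adjacent_intervals
      (intervalIntegrable_abs_rpow hp a 0) (intervalIntegrable_abs_rpow hp 0 b),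
      integral_abs_rpow_nonpos hq le_rfl h0a.le,
      integral_abs_rpow_nonneg hq le_rfl h0b.le]
    have h3 : (-a) ^ q = |a| ^ q := by rw [abs_of_neg h0a]
    have h4 : b ^ q = |b| ^ q := by rw [abs_of_nonneg h0b.le]
    rw [neg_zero, Real.zero_rpow hq.ne', h3, h4, sub_zero, sub_zero, ← add_div]

set_option maxHeartbeats 1600000 in
lemma key (q : ℝ) (hq : 0 < q) :
    ∃ c₁ c₂ : ℝ, 0 < c₁ ∧ 0 < c₂ ∧ ∀ w k : ℝ, k < w →
      c₁ * ((|w| + |k|) ^ (q - 1) * (w - k) ^ 2) ≤ q * ∫ σ in k..w, |σ| ^ (q - 1) * (σ - k) ∧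
      q * ∫ σ in k..w, |σ| ^ (q - 1) * (σ - k) ≤ c₂ * ((|w| + |k|) ^ (q - 1) * (w - k) ^ 2) := by
  have hp : (-1 : ℝ) < q - 1 := by linarith
  refine ⟨min (q * 4 ^ (1 - q) / 32) (q / 2), max q 8,
    lt_min (by positivity) (by positivity),
    lt_of_lt_of_le (by norm_num) (le_max_right q 8), ?_⟩
  intro w k hkw
  set B : ℝ := 4 ^ (1 - q) with hB_def
  set c₁ : ℝ := min (q * B / 32) (q / 2) with hc₁_def
  set c₂ : ℝ := max q 8 with hc₂_def
  set M : ℝ := |w| + |k| with hM_def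
  set d : ℝ := w - k with hd_def
  clear_value B c₁ c₂ M d
  have hB : 0 < B := by rw [hB_def]; positivity
  have hd' : 0 < w - k := sub_pos.2 hkw
  have hd : 0 < d := by rw [hd_def]; exact hd'
  have hdM : d ≤ M := by
    rw [hd_def, hM_def]; linarith [le_abs_self w, neg_le_abs k]
  have hM : 0 < M := lt_of_lt_of_le hd hdM
  have hMp : 0 < M ^ (q - 1) := Real.rpow_pos_of_pos hM _
  have hE : 0 ≤ M ^ (q - 1) * d ^ 2 := mul_nonneg hMp.le (sq_nonneg d)
  have hfint : ∀ a b : ℝ, IntervalIntegrable (fun σ : ℝ => |σ| ^ (q - 1) * (σ - k)) volume a b :=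
    II_main hp k
  have h4B : (4 : ℝ) ^ (q - 1) * B = 1 := by
    rw [hB_def, ← Real.rpow_add (by norm_num : (0:ℝ) < 4)]
    have he : q - 1 + (1 - q) = 0 := by ring
    rw [he, Real.rpow_zero]
  have hM4 : (M / 4 : ℝ) ^ (q - 1) = M ^ (q - 1) * B := by
    rw [Real.div_rpow hM.le (by norm_num),
      div_eq_iff (ne_of_gt (Real.rpow_pos_of_pos (by norm_num : (0:ℝ) < 4) _)),
      mul_assoc, mul_comm B ((4:ℝ) ^ (q - 1)), h4B, mul_one]
  have habs_le : ∀ x ∈ Icc k w, |x| ≤ M := by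
    intro x hx
    rw [abs_le]
    constructor
    · rw [hM_def]; linarith [abs_nonneg w, neg_abs_le k, hx.1]
    · rw [hM_def]; linarith [le_abs_self w, abs_nonneg k, hx.2]
  have hgint : IntervalIntegrable (fun σ : ℝ => M ^ (q - 1) * (σ - k)) volume k w :=
    Continuous.intervalIntegrable (by fun_prop) k w
  have hconst_int : ∫ σ in k..w, M ^ (q - 1) * (σ - k)
      = M ^ (q - 1) * (((w - k) ^ 2 - (k - k) ^ 2) / 2) := by
    rw [intervalIntegral.integral_const_mul, integral_sub_const]
  rcases le_or_gt 1 q with hq1 | hq1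
  · -- q ≥ 1
    have hp0 : (0:ℝ) ≤ q - 1 := by linarith
    constructor
    · -- lower bound, q ≥ 1
      have hIlow : M ^ (q-1) * B * (d ^ 2 / 32) ≤ ∫ σ in k..w, |σ| ^ (q-1) * (σ - k) := by
        rcases le_or_gt |k| |w| with habs | habs
        · -- |k| ≤ |w| hence w > 0
          have hw : 0 < w := by
            by_contra h
            push_neg at h
            rw [abs_of_nonpos h, abs_of_neg (lt_of_lt_of_le hkw h)] at habs
            linarith
          set t := max k (w / 2) with ht_def
          have hkt : k ≤ t := le_max_left _ _
          have htw : t ≤ w := max_le hkw.le (by linarith)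
          have ht2 : w / 2 ≤ t := le_max_right _ _
          have hsplit := intervalIntegral.integral_add_adjacent_intervals (hfint k t) (hfint t w)
          have h1 : (0:ℝ) ≤ ∫ σ in k..t, |σ| ^ (q-1) * (σ - k) :=
            intervalIntegral.integral_nonneg hkt (fun x hx =>
              mul_nonneg (Real.rpow_nonneg (abs_nonneg x) _) (by linarith [hx.1]))
          have h2 : ∫ σ in t..w, (w/2) ^ (q-1) * (σ - k) ≤ ∫ σ in t..w, |σ| ^ (q-1) * (σ - k) := by
            apply intervalIntegral.integral_mono_on htw
              (Continuous.intervalIntegrable (by fun_prop) t w) (hfint t w)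
            intro x hx
            have hx1 : w / 2 ≤ |x| := le_trans (le_trans ht2 hx.1) (le_abs_self x)
            exact mul_le_mul_of_nonneg_right
              (Real.rpow_le_rpow (by linarith) hx1 hp0) (by linarith [hx.1])
          have h3 : ∫ σ in t..w, (w/2) ^ (q-1) * (σ - k)
              = (w/2) ^ (q-1) * (((w - k) ^ 2 - (t - k) ^ 2) / 2) := by
            rw [intervalIntegral.integral_const_mul, integral_sub_const]
          have hA : (w - k) ^ 2 / 4 ≤ (w - k) ^ 2 - (t - k) ^ 2 := by
            rcases le_total (w/2) k with h | h
            · rw [ht_def, max_eq_left h]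
              nlinarith [sq_nonneg (w - k)]
            · rw [ht_def, max_eq_right h]
              have hkle : |k| ≤ w := le_trans habs (le_of_eq (abs_of_pos hw))
              have hkge : -w ≤ k := by linarith [neg_abs_le k]
              nlinarith [mul_nonneg (by linarith : (0:ℝ) ≤ w - k) (by linarith : (0:ℝ) ≤ w + k),
                mul_nonneg (by linarith : (0:ℝ) ≤ w/2 - k) hw.le]
          have h5 : (M/4) ^ (q-1) ≤ (w/2) ^ (q-1) := by
            apply Real.rpow_le_rpow (by linarith) ?_ hp0
            have hws : |w| = w := abs_of_pos hw
            rw [hM_def]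
            linarith
          have h6 : (M/4) ^ (q-1) * (d ^ 2 / 8) ≤ ∫ σ in t..w, |σ| ^ (q-1) * (σ - k) := by
            refine le_trans ?_ h2
            rw [h3]
            have hw2p : (0:ℝ) ≤ (w/2) ^ (q-1) := Real.rpow_nonneg (by linarith) _
            calc (M/4) ^ (q-1) * (d ^ 2 / 8) ≤ (w/2) ^ (q-1) * (d ^ 2 / 8) :=
                mul_le_mul_of_nonneg_right h5 (by positivity)
              _ ≤ (w/2) ^ (q-1) * (((w - k) ^ 2 - (t - k) ^ 2) / 2) := by
                apply mul_le_mul_of_nonneg_left ?_ hw2p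
                rw [hd_def]
                linarith
          rw [← hsplit]
          have h7 : M ^ (q-1) * B * (d ^ 2 / 32) ≤ (M/4) ^ (q-1) * (d ^ 2 / 8) := by
            rw [hM4]
            nlinarith [mul_nonneg (mul_nonneg hMp.le hB.le) (sq_nonneg d)]
          linarith
        · -- |w| < |k| hence k < 0
          have hk : k < 0 := by
            by_contra h
            push_neg at h
            rw [abs_of_nonneg h, abs_of_pos (lt_of_le_of_lt h hkw)] at habs
            linarith
          set s := min w (k / 2) with hs_def
          have hks : k ≤ s := le_min hkw.le (by linarith)
          have hsw : s ≤ w := min_le_left _ _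
          have hs2 : s ≤ k / 2 := min_le_right _ _
          have hsplit := intervalIntegral.integral_add_adjacent_intervals (hfint k s) (hfint s w)
          have h1 : (0:ℝ) ≤ ∫ σ in s..w, |σ| ^ (q-1) * (σ - k) :=
            intervalIntegral.integral_nonneg hsw (fun x hx =>
              mul_nonneg (Real.rpow_nonneg (abs_nonneg x) _) (by linarith [hx.1]))
          have h2 : ∫ σ in k..s, (-k/2) ^ (q-1) * (σ - k) ≤ ∫ σ in k..s, |σ| ^ (q-1) * (σ - k) := by
            apply intervalIntegral.integral_mono_on hks
              (Continuous.intervalIntegrable (by fun_prop) k s) (hfint k s)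
            intro x hx
            have hx1 : -k/2 ≤ |x| := by
              linarith [neg_le_abs x, hx.2, hs2]
            exact mul_le_mul_of_nonneg_right (Real.rpow_le_rpow (by linarith) hx1 hp0)
              (by linarith [hx.1])
          have h3 : ∫ σ in k..s, (-k/2) ^ (q-1) * (σ - k)
              = (-k/2) ^ (q-1) * (((s - k) ^ 2 - (k - k) ^ 2) / 2) := by
            rw [intervalIntegral.integral_const_mul, integral_sub_const]
          have hkk : |k| = -k := abs_of_neg hk
          have hdk : w - k ≤ -2*k := by
            have h9 := hdM
            rw [hd_def, hM_def] at h9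
            linarith [habs.le]
          have hA : (w - k) ^ 2 / 16 ≤ (s - k) ^ 2 := by
            rcases le_total w (k/2) with h | h
            · rw [hs_def, min_eq_left h]
              nlinarith [sq_nonneg (w - k)]
            · rw [hs_def, min_eq_right h]
              nlinarith [hd', hdk]
          have h5 : (M/4) ^ (q-1) ≤ (-k/2) ^ (q-1) := by
            apply Real.rpow_le_rpow (by linarith) ?_ hp0
            rw [hM_def]
            linarith [habs.le]
          have h6 : (M/4) ^ (q-1) * (d ^ 2 / 32) ≤ ∫ σ in k..s, |σ| ^ (q-1) * (σ - k) := by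
            refine le_trans ?_ h2
            rw [h3]
            have hkp : (0:ℝ) ≤ (-k/2) ^ (q-1) := Real.rpow_nonneg (by linarith) _
            calc (M/4) ^ (q-1) * (d ^ 2 / 32) ≤ (-k/2) ^ (q-1) * (d ^ 2 / 32) :=
                mul_le_mul_of_nonneg_right h5 (by positivity)
              _ ≤ (-k/2) ^ (q-1) * (((s - k) ^ 2 - (k - k) ^ 2) / 2) := by
                apply mul_le_mul_of_nonneg_left ?_ hkp
                rw [hd_def]
                nlinarith [hA]
          rw [← hsplit]
          have h7 : M ^ (q-1) * B * (d ^ 2 / 32) = (M/4) ^ (q-1) * (d ^ 2 / 32) := by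
            rw [hM4]
          linarith
      calc c₁ * (M ^ (q-1) * d ^ 2) ≤ (q * B / 32) * (M ^ (q-1) * d ^ 2) :=
            mul_le_mul_of_nonneg_right (by rw [hc₁_def]; exact min_le_left _ _) hE
        _ = q * (M ^ (q-1) * B * (d ^ 2 / 32)) := by ring
        _ ≤ q * ∫ σ in k..w, |σ| ^ (q-1) * (σ - k) := mul_le_mul_of_nonneg_left hIlow hq.le
    · -- upper bound, q ≥ 1
      have h1 : ∫ σ in k..w, |σ| ^ (q-1) * (σ - k) ≤ ∫ σ in k..w, M ^ (q-1) * (σ - k) := by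
        apply intervalIntegral.integral_mono_on hkw.le (hfint k w) hgint
        intro x hx
        exact mul_le_mul_of_nonneg_right
          (Real.rpow_le_rpow (abs_nonneg x) (habs_le x hx) hp0) (by linarith [hx.1])
      calc q * ∫ σ in k..w, |σ| ^ (q-1) * (σ - k)
          ≤ q * (M ^ (q-1) * (((w - k) ^ 2 - (k - k) ^ 2) / 2)) :=
            mul_le_mul_of_nonneg_left (h1.trans_eq hconst_int) hq.le
        _ = (q/2) * (M ^ (q-1) * d ^ 2) := by rw [hd_def]; ring
        _ ≤ c₂ * (M ^ (q-1) * d ^ 2) := by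
            apply mul_le_mul_of_nonneg_right ?_ hE
            rw [hc₂_def]
            exact le_trans (by linarith) (le_max_left q 8)
  · -- q < 1
    have hp0' : q - 1 < 0 := by linarith
    constructor
    · -- lower bound, q < 1
      have h1 : ∫ σ in k..w, M ^ (q-1) * (σ - k) ≤ ∫ σ in k..w, |σ| ^ (q-1) * (σ - k) := by
        apply intervalIntegral.integral_mono_ae_restrict hkw.le hgint (hfint k w)
        have h0 : ∀ᵐ (x:ℝ) ∂(volume.restrict (Icc k w)), x ≠ 0 := by
          refine ae_restrict_of_ae ?_
          rw [ae_iff]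
          have he : {x : ℝ | ¬ x ≠ 0} = {0} := by ext x; simp
          rw [he]
          exact Real.volume_singleton
        filter_upwards [h0, ae_restrict_mem measurableSet_Icc] with x hx0 hx
        have hle : M ^ (q-1) ≤ |x| ^ (q-1) :=
          Real.rpow_le_rpow_of_nonpos (abs_pos.2 hx0) (habs_le x hx) hp0'.le
        exact mul_le_mul_of_nonneg_right hle (by linarith [hx.1])
      calc c₁ * (M ^ (q-1) * d ^ 2) ≤ (q/2) * (M ^ (q-1) * d ^ 2) :=
            mul_le_mul_of_nonneg_right (by rw [hc₁_def]; exact min_le_right _ _) hE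
        _ = q * (M ^ (q-1) * (((w - k) ^ 2 - (k - k) ^ 2) / 2)) := by rw [hd_def]; ring
        _ ≤ q * ∫ σ in k..w, |σ| ^ (q-1) * (σ - k) :=
            mul_le_mul_of_nonneg_left (hconst_int.symm.trans_le h1) hq.le
    · -- upper bound, q < 1
      rcases le_or_gt M (4*d) with hreg | hreg
      · -- M ≤ 4d
        have h1 : ∫ σ in k..w, |σ| ^ (q-1) * (σ - k) ≤ ∫ σ in k..w, |σ| ^ (q-1) * d := by
          apply intervalIntegral.integral_mono_on hkw.le (hfint k w)
            ((intervalIntegrable_abs_rpow hp k w).mul_continuousOn continuousOn_const)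
          intro x hx
          exact mul_le_mul_of_nonneg_left (by rw [hd_def]; linarith [hx.2])
            (Real.rpow_nonneg (abs_nonneg x) _)
        have h2 : ∫ σ in k..w, |σ| ^ (q-1) * d = (∫ σ in k..w, |σ| ^ (q-1)) * d :=
          intervalIntegral.integral_mul_const _ _
        have h3 : (∫ σ in k..w, |σ| ^ (q-1)) ≤ (|k| ^ q + |w| ^ q) / q :=
          integral_abs_rpow_le hq hkw.le
        have h4 : |k| ^ q ≤ M ^ q :=
          Real.rpow_le_rpow (abs_nonneg k) (by rw [hM_def]; linarith [abs_nonneg w]) hq.le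
        have h5 : |w| ^ q ≤ M ^ q :=
          Real.rpow_le_rpow (abs_nonneg w) (by rw [hM_def]; linarith [abs_nonneg k]) hq.le
        have h6 : M ^ q = M ^ (q-1) * M := by
          rw [← Real.rpow_add_one hM.ne' (q-1)]
          norm_num
        have h7 : ∫ σ in k..w, |σ| ^ (q-1) * (σ - k) ≤ ((|k| ^ q + |w| ^ q) / q) * d :=
          (h1.trans_eq h2).trans (mul_le_mul_of_nonneg_right h3 hd.le)
        calc q * ∫ σ in k..w, |σ| ^ (q-1) * (σ - k)
            ≤ q * (((|k| ^ q + |w| ^ q) / q) * d) := mul_le_mul_of_nonneg_left h7 hq.le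
          _ = (|k| ^ q + |w| ^ q) * d := by field_simp
          _ ≤ (M ^ q + M ^ q) * d := mul_le_mul_of_nonneg_right (add_le_add h4 h5) hd.le
          _ = 2 * (M ^ (q-1) * (M * d)) := by rw [h6]; ring
          _ ≤ 2 * (M ^ (q-1) * ((4*d) * d)) := by
              apply mul_le_mul_of_nonneg_left (mul_le_mul_of_nonneg_left
                (mul_le_mul_of_nonneg_right hreg hd.le) hMp.le) (by norm_num)
          _ = 8 * (M ^ (q-1) * d ^ 2) := by ring
          _ ≤ c₂ * (M ^ (q-1) * d ^ 2) :=
              mul_le_mul_of_nonneg_right (by rw [hc₂_def]; exact le_max_right q 8) hE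
      · -- 4d < M
        have hx4 : ∀ x ∈ Icc k w, M/4 ≤ |x| := by
          intro x hx
          have e1 : |w| ≤ |x| + d := by
            have t1 : |w| - |x| ≤ |w - x| := abs_sub_abs_le_abs_sub w x
            have t2 : |w - x| ≤ d := by
              rw [abs_of_nonneg (by linarith [hx.2] : (0:ℝ) ≤ w - x), hd_def]
              linarith [hx.1]
            linarith
          have e2 : |k| ≤ |x| + d := by
            have t1 : |k| - |x| ≤ |k - x| := abs_sub_abs_le_abs_sub k x
            have t2 : |k - x| ≤ d := by
              rw [abs_of_nonpos (by linarith [hx.1] : k - x ≤ 0), hd_def]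
              linarith [hx.2]
            linarith
          have e3 : M ≤ 2 * |x| + 2 * d := by rw [hM_def]; linarith
          linarith
        have hgint4 : IntervalIntegrable (fun σ : ℝ => (M/4) ^ (q-1) * (σ - k)) volume k w :=
          Continuous.intervalIntegrable (by fun_prop) k w
        have h1 : ∫ σ in k..w, |σ| ^ (q-1) * (σ - k) ≤ ∫ σ in k..w, (M/4) ^ (q-1) * (σ - k) := by
          apply intervalIntegral.integral_mono_on hkw.le (hfint k w) hgint4
          intro x hx
          have h5 : |x| ^ (q-1) ≤ (M/4) ^ (q-1) :=
            Real.rpow_le_rpow_of_nonpos (by linarith) (hx4 x hx) hp0'.le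
          exact mul_le_mul_of_nonneg_right h5 (by linarith [hx.1])
        have h2 : ∫ σ in k..w, (M/4) ^ (q-1) * (σ - k)
            = (M/4) ^ (q-1) * (((w - k) ^ 2 - (k - k) ^ 2) / 2) := by
          rw [intervalIntegral.integral_const_mul, integral_sub_const]
        have hB4 : B ≤ 4 := by
          rw [hB_def]
          calc (4:ℝ) ^ (1 - q) ≤ 4 ^ (1:ℝ) :=
              Real.rpow_le_rpow_of_exponent_le (by norm_num) (by linarith)
            _ = 4 := Real.rpow_one 4
        calc q * ∫ σ in k..w, |σ| ^ (q-1) * (σ - k)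
            ≤ q * ((M/4) ^ (q-1) * (((w - k) ^ 2 - (k - k) ^ 2) / 2)) :=
              mul_le_mul_of_nonneg_left (h1.trans_eq h2) hq.le
          _ = (q * B / 2) * (M ^ (q-1) * d ^ 2) := by rw [hM4, hd_def]; ring
          _ ≤ 8 * (M ^ (q-1) * d ^ 2) := by
              apply mul_le_mul_of_nonneg_right ?_ hE
              nlinarith [hq, hq1, hB, hB4]
          _ ≤ c₂ * (M ^ (q-1) * d ^ 2) :=
              mul_le_mul_of_nonneg_right (by rw [hc₂_def]; exact le_max_right q 8) hE

lemma gPlus_of_le {q w k : ℝ} (h : w ≤ k) : gPlus q w k = 0 := by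
  unfold gPlus
  rw [intervalIntegral.integral_congr (g := fun _ : ℝ => (0:ℝ)) ?_]
  · simp
  · intro x hx
    rw [uIcc_of_ge h] at hx
    simp only [pPart]
    rw [max_eq_right (by linarith [hx.2] : x - k ≤ 0), mul_zero]

lemma gPlus_of_lt {q w k : ℝ} (h : k < w) :
    gPlus q w k = q * ∫ σ in k..w, |σ| ^ (q - 1) * (σ - k) := by
  unfold gPlus
  congr 1
  apply intervalIntegral.integral_congr
  intro x hx
  rw [uIcc_of_le h.le] at hx
  simp only [pPart]
  rw [max_eq_left (by linarith [hx.1] : (0:ℝ) ≤ x - k)]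

lemma gMinus_eq (q w k : ℝ) : gMinus q w k = gPlus q (-w) (-k) := by
  unfold gMinus gPlus
  have hfun : (fun x : ℝ => |(-x)| ^ (q-1) * pPart (-x - -k))
      = fun x : ℝ => |x| ^ (q-1) * nPart (x - k) := by
    funext x
    rw [abs_neg]
    congr 1
    simp only [pPart, nPart]
    congr 1
    ring
  have h := intervalIntegral.integral_comp_neg (a := k) (b := w)
    (fun σ : ℝ => |σ| ^ (q-1) * pPart (σ - -k))
  rw [hfun] at h
  rw [intervalIntegral.integral_symm (-w) (-k), ← h]
  ring

lemma gPlus_bounds (q : ℝ) (hq : 0 < q) :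
    ∃ γ : ℝ, 1 ≤ γ ∧ ∀ w k : ℝ,
      γ⁻¹ * (if w = 0 ∧ k = 0 then 0 else (|w| + |k|) ^ (q - 1) * pPart (w - k) ^ 2)
        ≤ gPlus q w k ∧
      gPlus q w k ≤
        γ * (if w = 0 ∧ k = 0 then 0 else (|w| + |k|) ^ (q - 1) * pPart (w - k) ^ 2) := by
  obtain ⟨c₁, c₂, hc₁, hc₂, hkey⟩ := key q hq
  refine ⟨max 1 (max c₂ c₁⁻¹), le_max_left _ _, ?_⟩
  set γ := max 1 (max c₂ c₁⁻¹) with hγ_def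
  have hγ : 0 < γ := lt_of_lt_of_le one_pos (le_max_left _ _)
  have hγc₂ : c₂ ≤ γ := le_trans (le_max_left _ _) (le_max_right _ _)
  have hγinv : γ⁻¹ ≤ c₁ := by
    have h1 : c₁⁻¹ ≤ γ := le_trans (le_max_right _ _) (le_max_right _ _)
    calc γ⁻¹ ≤ (c₁⁻¹)⁻¹ := by
          apply inv_anti₀ (by positivity) h1
      _ = c₁ := inv_inv c₁
  intro w k
  rcases lt_or_ge k w with h | h
  · have hne : ¬ (w = 0 ∧ k = 0) := by
      rintro ⟨rfl, rfl⟩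
      exact lt_irrefl 0 h
    rw [if_neg hne, gPlus_of_lt h]
    have hpp : pPart (w - k) = w - k := max_eq_left (by linarith)
    rw [hpp]
    have hX : (0:ℝ) ≤ (|w| + |k|) ^ (q - 1) * (w - k) ^ 2 := by
      apply mul_nonneg (Real.rpow_nonneg (by positivity) _) (sq_nonneg _)
    obtain ⟨hlo, hhi⟩ := hkey w k h
    constructor
    · exact le_trans (mul_le_mul_of_nonneg_right hγinv hX) hlo
    · exact le_trans hhi (mul_le_mul_of_nonneg_right hγc₂ hX)
  · rw [gPlus_of_le h]
    have hpp : pPart (w - k) = 0 := max_eq_right (by linarith)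
    by_cases h0 : w = 0 ∧ k = 0
    · rw [if_pos h0]
      simp
    · rw [if_neg h0, hpp]
      norm_num


end Stmt2Helpers

theorem stmt_2 (q : ℝ) (hq : 0 < q) :
    ∃ γ : ℝ, 1 ≤ γ ∧ ∀ w k : ℝ,
      (γ⁻¹ * (if w = 0 ∧ k = 0 then 0 else (|w| + |k|) ^ (q - 1) * pPart (w - k) ^ 2)
          ≤ gPlus q w k ∧
        gPlus q w k ≤
          γ * (if w = 0 ∧ k = 0 then 0 else (|w| + |k|) ^ (q - 1) * pPart (w - k) ^ 2)) ∧
      (γ⁻¹ * (if w = 0 ∧ k = 0 then 0 else (|w| + |k|) ^ (q - 1) * nPart (w - k) ^ 2)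
          ≤ gMinus q w k ∧
        gMinus q w k ≤
          γ * (if w = 0 ∧ k = 0 then 0 else (|w| + |k|) ^ (q - 1) * nPart (w - k) ^ 2)) := by
  
  obtain ⟨γ, hγ, h⟩ := gPlus_bounds q hq
  refine ⟨γ, hγ, fun w k => ⟨h w k, ?_⟩⟩
  have h2 := h (-w) (-k)
  have e1 : ((-w : ℝ) = 0 ∧ (-k : ℝ) = 0) = (w = 0 ∧ k = 0) := by simp [neg_eq_zero]
  have e2 : pPart (-w - -k) = nPart (w - k) := by
    simp only [pPart, nPart]
    congr 1
    ring
  have e3 : |(-w)| + |(-k)| = |w| + |k| := by rw [abs_neg, abs_neg]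
  simp only [e1, e2, e3] at h2
  rw [gMinus_eq]
  exact h2
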